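/- arXiv:1505.05055 — 2 statements merged into one kernel-verified Lean document; each statement's English description precedes it below -/
import Mathlib

section
/- A contiguous segment of a Morton curve through a uniform or adaptive tree of maximum refinement level L produces at most two distinct face-connected subdomains, independently of the space dimension d. Precisely: fix d ≥ 1 and L ≥ 0, let T be an adaptive tree of maximum level L, and let S ⊆ T be a contiguous segment of the Morton curve through T. Then the set S has at most two face-connected components. -/
/-- The `r`-th coordinate (1 ≤ r ≤ d) of a level-`L` quadrant `Q` in dimension `d`. -/
def mortonCoord (d L r Q : ℕ) : ℕ :=
  ∑ ℓ ∈ Finset.range L, (Q / 2 ^ (ℓ * d + (r - 1)) % 2) * 2 ^ ℓ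

/-- Two level-`L` quadrants are face-neighbors: they differ by exactly one in exactly
one coordinate and agree in all other coordinates. -/
def MortonFaceNbr (d L Q Q' : ℕ) : Prop :=
  Q ≠ Q' ∧ ∃ r, 1 ≤ r ∧ r ≤ d ∧
    ((mortonCoord d L r Q : ℤ) - (mortonCoord d L r Q' : ℤ)).natAbs = 1 ∧
    ∀ s, 1 ≤ s → s ≤ d → s ≠ r → mortonCoord d L s Q = mortonCoord d L s Q'

/-- A set of level-`L` quadrants is face-connected: the graph on `S` whose edges join
face-neighbors is connected. -/
def MortonFaceConnected (d L : ℕ) (S : Set ℕ) : Prop :=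
  ∀ Q ∈ S, ∀ Q' ∈ S,
    Relation.ReflTransGen (fun a b => a ∈ S ∧ b ∈ S ∧ MortonFaceNbr d L a b) Q Q'

/-- `S` has at most `n` face-connected components: it can be written as a union of `n`
face-connected subsets. -/
def MortonCompBound (d L : ℕ) (S : Set ℕ) (n : ℕ) : Prop :=
  ∃ f : Fin n → Set ℕ, S = ⋃ i, f i ∧ ∀ i, MortonFaceConnected d L (f i)

/-- A quadrant of level `p.1 ≤ L` (encoded as the pair `p = (level, index)`) has the
level-`L` quadrant `x` among its level-`L` descendants. -/
def mortonDescends (d L : ℕ) (p : ℕ × ℕ) (x : ℕ) : Prop :=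
  p.2 * 2 ^ (d * (L - p.1)) ≤ x ∧ x < (p.2 + 1) * 2 ^ (d * (L - p.1))

/-- `T` is an adaptive tree of maximum level `L`: a finite set of quadrants of levels
`≤ L` whose sets of level-`L` descendants partition `[0, 2^{dL})`. -/
def MortonAdaptiveTree (d L : ℕ) (T : Finset (ℕ × ℕ)) : Prop :=
  (∀ p ∈ T, p.1 ≤ L ∧ p.2 < 2 ^ (d * p.1)) ∧
  ∀ x, x < 2 ^ (d * L) → ∃! p, p ∈ T ∧ mortonDescends d L p x

/-- Two tree quadrants are face-neighbors if some level-`L` descendant of one is a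
face-neighbor of some level-`L` descendant of the other. -/
def MortonTreeNbr (d L : ℕ) (p q : ℕ × ℕ) : Prop :=
  ∃ x y, mortonDescends d L p x ∧ mortonDescends d L q y ∧ MortonFaceNbr d L x y

/-- A set `S` of tree quadrants is face-connected. -/
def MortonTreeConnected (d L : ℕ) (S : Set (ℕ × ℕ)) : Prop :=
  ∀ p ∈ S, ∀ q ∈ S,
    Relation.ReflTransGen (fun a b => a ∈ S ∧ b ∈ S ∧ MortonTreeNbr d L a b) p q

/-!
In an aligned block of `2 ^ (t + 1)` level-`L` quadrants, the first quadrant of the upper half is a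
face-neighbor of a quadrant of the lower half, so by induction on `t` every initial segment of an
aligned block is face-connected. Reversing the Morton order is the point reflection of the grid, so
final segments of aligned blocks are face-connected as well. The level-`L` descendants of a
contiguous segment form an interval, and the midpoint of the smallest aligned block containing it
cuts it into a final segment of the lower half and an initial segment of the upper half. Face paths
between level-`L` quadrants lift to paths between the tree quadrants owning them, the owner being
unique because the tree partitions the grid.
-/

open Finset

namespace Nat

theorem testBit_sum_two_pow {s : Finset ℕ} {p : ℕ} :
    (∑ i ∈ s, 2 ^ i).testBit p = true ↔ p ∈ s := by
  rw [← mem_bitIndices, ← List.mem_toFinset, Finset.toFinset_bitIndices_sum_two_pow]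

theorem mul_add_eq_mul_add_iff {d ℓ ℓ' i j : ℕ} (hi : i < d) (hj : j < d) :
    ℓ * d + i = ℓ' * d + j ↔ ℓ = ℓ' ∧ i = j := by
  refine ⟨fun h => ?_, fun ⟨h₁, h₂⟩ => h₁ ▸ h₂ ▸ rfl⟩
  have hd : 0 < d := by omega
  have hdiv := congrArg (· / d) h
  have hmod := congrArg (· % d) h
  simp only [Nat.mul_comm _ d, Nat.mul_add_div hd, Nat.mul_add_mod, Nat.div_eq_of_lt hi,
    Nat.div_eq_of_lt hj, Nat.mod_eq_of_lt hi, Nat.mod_eq_of_lt hj] at hdiv hmod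
  omega

end Nat

section Coordinates

variable {d L r : ℕ}

theorem mortonCoord_eq_sum_testBit (d L r Q : ℕ) :
    mortonCoord d L r Q = ∑ ℓ ∈ range L, (Q.testBit (ℓ * d + (r - 1))).toNat * 2 ^ ℓ := by
  simp only [mortonCoord, Nat.toNat_testBit]

theorem mortonCoord_eq_sum_filter (d L r Q : ℕ) :
    mortonCoord d L r Q = ∑ ℓ ∈ range L with Q.testBit (ℓ * d + (r - 1)), 2 ^ ℓ := by
  rw [mortonCoord_eq_sum_testBit, sum_filter]
  refine sum_congr rfl fun ℓ _ => ?_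
  cases Q.testBit (ℓ * d + (r - 1)) <;> simp

theorem mortonCoord_add_of_dvd {t m e : ℕ} (hm : 2 ^ t ∣ m) (he : e < 2 ^ t) :
    mortonCoord d L r (m + e) = mortonCoord d L r m + mortonCoord d L r e := by
  obtain ⟨k, rfl⟩ := hm
  simp only [mortonCoord_eq_sum_testBit, ← sum_add_distrib, ← Nat.add_mul]
  refine sum_congr rfl fun ℓ _ => ?_
  rw [Nat.testBit_two_pow_mul_add k he, Nat.testBit_two_pow_mul]
  split_ifs with h
  · simp [show ¬ t ≤ ℓ * d + (r - 1) by omega]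
  · rw [Nat.testBit_lt_two_pow (he.trans_le (Nat.pow_le_pow_right two_pos (by omega)))]
    simp [show t ≤ ℓ * d + (r - 1) by omega]

theorem mortonCoord_sum_two_pow_axis {i : ℕ} {s : Finset ℕ} (hr : 1 ≤ r) (hrd : r ≤ d)
    (hi : i < d) (hs : s ⊆ range L) :
    mortonCoord d L r (∑ ℓ ∈ s, 2 ^ (ℓ * d + i)) = if r - 1 = i then ∑ ℓ ∈ s, 2 ^ ℓ else 0 := by
  have hinj : Set.InjOn (fun ℓ => ℓ * d + i) s := fun ℓ _ ℓ' _ h =>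
    ((Nat.mul_add_eq_mul_add_iff hi hi).1 h).1
  rw [← sum_image hinj, mortonCoord_eq_sum_filter]
  simp only [Nat.testBit_sum_two_pow, mem_image,
    Nat.mul_add_eq_mul_add_iff hi (show r - 1 < d by omega)]
  split_ifs with h
  · simp [h, filter_mem_eq_inter, inter_eq_right.2 hs]
  · simp [Ne.symm h]

theorem mortonCoord_two_pow_sub_succ {Q : ℕ} (hr : 1 ≤ r) (hrd : r ≤ d) (hQ : Q < 2 ^ (d * L)) :
    mortonCoord d L r (2 ^ (d * L) - (Q + 1)) + mortonCoord d L r Q = ∑ ℓ ∈ range L, 2 ^ ℓ := by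
  simp only [mortonCoord_eq_sum_testBit, ← sum_add_distrib, ← Nat.add_mul]
  refine sum_congr rfl fun ℓ hℓ => ?_
  have hpos : ℓ * d + (r - 1) < d * L := by
    have : (ℓ + 1) * d ≤ L * d := Nat.mul_le_mul_right d (mem_range.1 hℓ)
    rw [Nat.add_mul, Nat.mul_comm L] at this; omega
  rw [Nat.testBit_two_pow_sub_succ hQ, decide_eq_true hpos]
  cases Q.testBit (ℓ * d + (r - 1)) <;> simp

end Coordinates

section Neighbors

variable {d L : ℕ}

theorem MortonFaceNbr.symm {Q Q' : ℕ} (h : MortonFaceNbr d L Q Q') : MortonFaceNbr d L Q' Q := by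
  obtain ⟨hne, r, hr, hrd, hdiff, heq⟩ := h
  exact ⟨hne.symm, r, hr, hrd, by omega, fun s hs hsd hsr => (heq s hs hsd hsr).symm⟩

/-- The neighbor in the lower half is the quadrant whose digits below `t` on the axis of digit `t`
are all set. -/
theorem exists_mortonFaceNbr_add_two_pow {t m : ℕ} (ht : t < d * L) (hm : 2 ^ (t + 1) ∣ m) :
    ∃ e < 2 ^ t, MortonFaceNbr d L (m + e) (m + 2 ^ t) := by
  have hd : 0 < d := Nat.pos_of_ne_zero (by rintro rfl; simp at ht)
  have hi : t % d < d := Nat.mod_lt t hd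
  have hsub : range (t / d) ⊆ range L := range_subset_range.2 (Nat.div_le_of_le_mul ht.le)
  have hsingle : {t / d} ⊆ range L :=
    singleton_subset_iff.2 (mem_range.2 (Nat.div_lt_of_lt_mul ht))
  have hpow : 2 ^ t = ∑ ℓ ∈ {t / d}, 2 ^ (ℓ * d + t % d) := by
    rw [sum_singleton, Nat.div_add_mod']
  have hrun : ∑ ℓ ∈ range (t / d), 2 ^ (ℓ * d + t % d) < 2 ^ t := by
    rw [← sum_image fun ℓ _ ℓ' _ h => ((Nat.mul_add_eq_mul_add_iff hi hi).1 h).1]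
    refine Nat.geomSum_lt le_rfl ?_
    simp only [mem_image, mem_range, forall_exists_index, and_imp]
    rintro _ ℓ hℓ rfl
    have : (ℓ + 1) * d ≤ t / d * d := Nat.mul_le_mul_right d hℓ
    have := Nat.div_add_mod' t d
    rw [Nat.add_mul] at *; omega
  have hcoord (r : ℕ) {x : ℕ} (hx : x ≤ 2 ^ t) :=
    mortonCoord_add_of_dvd (d := d) (L := L) (r := r) hm
      (hx.trans_lt (Nat.pow_lt_pow_succ one_lt_two))
  refine ⟨_, hrun, by omega, t % d + 1, by omega, by omega, ?_, fun s hs hsd hst => ?_⟩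
  · rw [hcoord _ hrun.le, hcoord _ le_rfl, hpow,
      mortonCoord_sum_two_pow_axis (by omega) (by omega) hi hsub,
      mortonCoord_sum_two_pow_axis (by omega) (by omega) hi hsingle,
      if_pos (by omega), if_pos (by omega), sum_singleton, Nat.geomSum_eq le_rfl]
    simp
  · rw [hcoord _ hrun.le, hcoord _ le_rfl, hpow,
      mortonCoord_sum_two_pow_axis hs hsd hi hsub,
      mortonCoord_sum_two_pow_axis hs hsd hi hsingle, if_neg (by omega), if_neg (by omega)]

theorem mortonFaceNbr_two_pow_sub_succ {Q Q' : ℕ} (hQ : Q < 2 ^ (d * L)) (hQ' : Q' < 2 ^ (d * L))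
    (h : MortonFaceNbr d L Q Q') :
    MortonFaceNbr d L (2 ^ (d * L) - (Q + 1)) (2 ^ (d * L) - (Q' + 1)) := by
  obtain ⟨hne, r, hr, hrd, hdiff, heq⟩ := h
  have hsum (s : ℕ) (hs : 1 ≤ s) (hsd : s ≤ d) := (mortonCoord_two_pow_sub_succ hs hsd hQ).trans
    (mortonCoord_two_pow_sub_succ hs hsd hQ').symm
  refine ⟨by omega, r, hr, hrd, ?_, fun s hs hsd hsr => ?_⟩
  · have := hsum r hr hrd; omega
  · have := hsum s hs hsd; have := heq s hs hsd hsr; omega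

end Neighbors

section Connectivity

variable {d L : ℕ}

theorem mortonFaceConnected_of_subsingleton {A : Set ℕ} (hA : A.Subsingleton) :
    MortonFaceConnected d L A := fun _ hQ _ hQ' => hA hQ hQ' ▸ Relation.ReflTransGen.refl

theorem MortonFaceConnected.union {A B : Set ℕ} (hA : MortonFaceConnected d L A)
    (hB : MortonFaceConnected d L B) {a b : ℕ} (ha : a ∈ A) (hb : b ∈ B)
    (hab : MortonFaceNbr d L a b) : MortonFaceConnected d L (A ∪ B) := by
  set R := fun Q Q' => Q ∈ A ∪ B ∧ Q' ∈ A ∪ B ∧ MortonFaceNbr d L Q Q'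
  have : Std.Symm R := ⟨fun _ _ ⟨hQ, hQ', h⟩ => ⟨hQ', hQ, h.symm⟩⟩
  have toR {C : Set ℕ} (hC : C ⊆ A ∪ B) {Q Q' : ℕ}
      (h : Relation.ReflTransGen (fun Q Q' => Q ∈ C ∧ Q' ∈ C ∧ MortonFaceNbr d L Q Q') Q Q') :
      Relation.ReflTransGen R Q Q' :=
    Relation.ReflTransGen.mono (fun _ _ ⟨hQ, hQ', h⟩ => ⟨hC hQ, hC hQ', h⟩) _ _ h
  have to_a : ∀ Q ∈ A ∪ B, Relation.ReflTransGen R Q a := by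
    rintro Q (hQ | hQ)
    · exact toR Set.subset_union_left (hA Q hQ a ha)
    · exact (toR Set.subset_union_right (hB Q hQ b hb)).tail
        ⟨Or.inr hb, Or.inl ha, hab.symm⟩
  exact fun Q hQ Q' hQ' => (to_a Q hQ).trans (Std.Symm.symm _ _ (to_a Q' hQ'))

theorem MortonFaceConnected.image {A : Set ℕ} (hA : MortonFaceConnected d L A) {f : ℕ → ℕ}
    (hf : ∀ Q ∈ A, ∀ Q' ∈ A, MortonFaceNbr d L Q Q' → MortonFaceNbr d L (f Q) (f Q')) :
    MortonFaceConnected d L (f '' A) := by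
  rintro _ ⟨Q, hQ, rfl⟩ _ ⟨Q', hQ', rfl⟩
  exact (hA Q hQ Q' hQ').lift f fun a b ⟨ha, hb, h⟩ =>
    ⟨Set.mem_image_of_mem f ha, Set.mem_image_of_mem f hb, hf a ha b hb h⟩

theorem mortonFaceConnected_Icc_of_dvd {t m b : ℕ} (ht : t ≤ d * L) (hm : 2 ^ t ∣ m)
    (hb : b < m + 2 ^ t) : MortonFaceConnected d L (Set.Icc m b) := by
  induction t generalizing m b with
  | zero =>
    exact mortonFaceConnected_of_subsingleton fun Q hQ Q' hQ' => by
      simp only [Set.mem_Icc, pow_zero] at hQ hQ' hb; omega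
  | succ t ih =>
    have hm' : 2 ^ t ∣ m := (pow_dvd_pow 2 t.le_succ).trans hm
    rcases lt_or_ge b (m + 2 ^ t) with hb' | hb'
    · exact ih (by omega) hm' hb'
    obtain ⟨e, he, hnbr⟩ := exists_mortonFaceNbr_add_two_pow (d := d) (L := L) (by omega) hm
    have hsplit : Set.Icc m b = Set.Icc m (m + 2 ^ t - 1) ∪ Set.Icc (m + 2 ^ t) b := by
      ext Q; simp only [Set.mem_union, Set.mem_Icc]; omega
    rw [hsplit]
    refine (ih (by omega) hm' (by omega)).union (ih (by omega) (dvd_add hm' dvd_rfl) (by omega))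
      ?_ ?_ hnbr
    · simp only [Set.mem_Icc]; omega
    · simp only [Set.mem_Icc]; omega

/-- Reversing the Morton order is the point reflection `Q ↦ 2 ^ (d L) - 1 - Q` of the grid, which
maps final segments of aligned blocks to initial ones. -/
theorem mortonFaceConnected_Icc_sub_of_dvd {t m a : ℕ} (hm : 2 ^ t ∣ m)
    (hmL : m + 2 ^ t ≤ 2 ^ (d * L)) (ha : m ≤ a) (ha' : a < m + 2 ^ t) :
    MortonFaceConnected d L (Set.Icc a (m + 2 ^ t - 1)) := by
  have ht : t ≤ d * L := (Nat.pow_le_pow_iff_right one_lt_two).1 (by omega)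
  have hdvd : 2 ^ t ∣ 2 ^ (d * L) - (m + 2 ^ t) :=
    Nat.dvd_sub (pow_dvd_pow 2 ht) (dvd_add hm dvd_rfl)
  have himage : (fun Q => 2 ^ (d * L) - (Q + 1)) ''
      Set.Icc (2 ^ (d * L) - (m + 2 ^ t)) (2 ^ (d * L) - (a + 1)) = Set.Icc a (m + 2 ^ t - 1) := by
    ext Q
    simp only [Set.mem_image, Set.mem_Icc]
    generalize 2 ^ (d * L) = N at hmL ⊢
    have := Nat.two_pow_pos t
    generalize 2 ^ t = B at *
    constructor
    · rintro ⟨Q', hQ', rfl⟩; omega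
    · intro hQ; exact ⟨N - (Q + 1), by omega, by omega⟩
  rw [← himage]
  refine (mortonFaceConnected_Icc_of_dvd ht hdvd (by omega)).image fun Q hQ Q' hQ' h =>
    mortonFaceNbr_two_pow_sub_succ ?_ ?_ h
  · exact hQ.2.trans_lt (by omega)
  · exact hQ'.2.trans_lt (by omega)

end Connectivity

section Components

variable {d L : ℕ}

theorem mortonCompBound_two_union {A B : Set ℕ} (hA : MortonFaceConnected d L A)
    (hB : MortonFaceConnected d L B) : MortonCompBound d L (A ∪ B) 2 :=
  ⟨![A, B], by ext; simp [Fin.exists_fin_two], Fin.forall_fin_two.2 ⟨hA, hB⟩⟩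

theorem mortonCompBound_two_Icc {t m a b : ℕ} (hm : 2 ^ t ∣ m) (hmL : m + 2 ^ t ≤ 2 ^ (d * L))
    (ha : m ≤ a) (hb : b < m + 2 ^ t) : MortonCompBound d L (Set.Icc a b) 2 := by
  induction t generalizing m with
  | zero =>
    rw [← Set.union_self (Set.Icc a b)]
    have : MortonFaceConnected d L (Set.Icc a b) :=
      mortonFaceConnected_of_subsingleton fun Q hQ Q' hQ' => by
        simp only [Set.mem_Icc, pow_zero] at hQ hQ' hb; omega
    exact mortonCompBound_two_union this this
  | succ t ih =>
    have hm' : 2 ^ t ∣ m := (pow_dvd_pow 2 t.le_succ).trans hm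
    rcases lt_or_ge b (m + 2 ^ t) with hb' | hb'
    · exact ih hm' (by omega) ha hb'
    rcases le_or_gt (m + 2 ^ t) a with ha' | ha'
    · exact ih (dvd_add hm' dvd_rfl) (by omega) ha' (by omega)
    have hsplit : Set.Icc a b = Set.Icc a (m + 2 ^ t - 1) ∪ Set.Icc (m + 2 ^ t) b := by
      ext Q; simp only [Set.mem_union, Set.mem_Icc]; omega
    have ht : t ≤ d * L := (Nat.pow_le_pow_iff_right one_lt_two).1 (by omega)
    rw [hsplit]
    exact mortonCompBound_two_union (mortonFaceConnected_Icc_sub_of_dvd hm' (by omega) ha ha')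
      (mortonFaceConnected_Icc_of_dvd ht (dvd_add hm' dvd_rfl) (by omega))

theorem mortonCompBound_two_of_ordConnected {X : Set ℕ} (hX : X.OrdConnected)
    (hXlt : ∀ x ∈ X, x < 2 ^ (d * L)) : MortonCompBound d L X 2 := by
  rcases X.eq_empty_or_nonempty with rfl | hne
  · rw [← Set.union_self ∅]
    have : MortonFaceConnected d L ∅ := mortonFaceConnected_of_subsingleton Set.subsingleton_empty
    exact mortonCompBound_two_union this this
  have hbdd : BddAbove X := ⟨2 ^ (d * L), fun x hx => (hXlt x hx).le⟩
  have hIcc : X = Set.Icc (sInf X) (sSup X) :=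
    (subset_Icc_csInf_csSup ⟨0, fun x _ => x.zero_le⟩ hbdd).antisymm
      (hX.out (Nat.sInf_mem hne) (Nat.sSup_mem hne hbdd))
  rw [hIcc]
  exact mortonCompBound_two_Icc (t := d * L) (m := 0) (dvd_zero _) (by simp) (Nat.zero_le _)
    (by simpa using hXlt _ (Nat.sSup_mem hne hbdd))

end Components

section Tree

variable {d L : ℕ} {T : Finset (ℕ × ℕ)}

theorem mortonDescends_self (d L : ℕ) (p : ℕ × ℕ) :
    mortonDescends d L p (p.2 * 2 ^ (d * (L - p.1))) :=
  ⟨le_rfl, Nat.mul_lt_mul_of_pos_right p.2.lt_succ_self (Nat.two_pow_pos _)⟩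

theorem MortonAdaptiveTree.lt_of_descends (hT : MortonAdaptiveTree d L T) {p : ℕ × ℕ}
    (hp : p ∈ T) {x : ℕ} (hx : mortonDescends d L p x) : x < 2 ^ (d * L) := by
  obtain ⟨hpL, hp2⟩ := hT.1 p hp
  calc x < (p.2 + 1) * 2 ^ (d * (L - p.1)) := hx.2
    _ ≤ 2 ^ (d * p.1) * 2 ^ (d * (L - p.1)) := Nat.mul_le_mul_right _ hp2
    _ = 2 ^ (d * L) := by rw [← pow_add, ← Nat.mul_add, Nat.add_sub_cancel' hpL]

theorem MortonAdaptiveTree.eq_of_descends (hT : MortonAdaptiveTree d L T) {p q : ℕ × ℕ}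
    (hp : p ∈ T) (hq : q ∈ T) {x : ℕ} (hpx : mortonDescends d L p x)
    (hqx : mortonDescends d L q x) : p = q :=
  (hT.2 x (hT.lt_of_descends hp hpx)).unique ⟨hp, hpx⟩ ⟨hq, hqx⟩

theorem MortonAdaptiveTree.mortonTreeConnected (hT : MortonAdaptiveTree d L T)
    {S : Set (ℕ × ℕ)} (hST : ∀ p ∈ S, p ∈ T) {A : Set ℕ} (hA : MortonFaceConnected d L A)
    (hAS : ∀ x ∈ A, ∃ p ∈ S, mortonDescends d L p x) :
    MortonTreeConnected d L {p ∈ S | ∃ x ∈ A, mortonDescends d L p x} := by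
  rintro p ⟨hpS, x, hxA, hpx⟩ q ⟨hqS, y, hyA, hqy⟩
  induction hA x hxA y hyA generalizing q with
  | refl => exact (hT.eq_of_descends (hST p hpS) (hST q hqS) hpx hqy) ▸ .refl
  | @tail w z _ hwz ih =>
    obtain ⟨hwA, hzA, hnbr⟩ := hwz
    obtain ⟨q', hq'S, hq'w⟩ := hAS w hwA
    exact (ih q' hq'S hwA hq'w).tail
      ⟨⟨hq'S, w, hwA, hq'w⟩, ⟨hqS, z, hzA, hqy⟩, w, z, hq'w, hqy, hnbr⟩

end Tree

theorem morton_adaptive_segment_at_most_two_components_general (d L : ℕ)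
    (T : Finset (ℕ × ℕ)) (hT : MortonAdaptiveTree d L T)
    (S : Set (ℕ × ℕ)) (hST : ∀ p ∈ S, p ∈ T)
    (hseg : ∀ x y z : ℕ, (∃ p ∈ S, mortonDescends d L p x) →
      (∃ p ∈ S, mortonDescends d L p z) → x ≤ y → y ≤ z →
      ∃ p ∈ S, mortonDescends d L p y) :
    ∃ f : Fin 2 → Set (ℕ × ℕ), S = ⋃ i, f i ∧ ∀ i, MortonTreeConnected d L (f i) := by
  set X := {x | ∃ p ∈ S, mortonDescends d L p x}
  have hX : X.OrdConnected := ⟨fun x hx z hz y hy => hseg x y z hx hz hy.1 hy.2⟩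
  obtain ⟨A, hXA, hA⟩ := mortonCompBound_two_of_ordConnected hX
    fun x ⟨p, hp, hpx⟩ => hT.lt_of_descends (hST p hp) hpx
  refine ⟨fun i => {p ∈ S | ∃ x ∈ A i, mortonDescends d L p x}, ?_, fun i =>
    hT.mortonTreeConnected hST (hA i) fun x hx => (hXA ▸ Set.mem_iUnion_of_mem i hx : x ∈ X)⟩
  ext p
  refine ⟨fun hp => ?_, fun hp => (Set.mem_iUnion.1 hp).elim fun _ h => h.1⟩
  have hpX : p.2 * 2 ^ (d * (L - p.1)) ∈ X := ⟨p, hp, mortonDescends_self d L p⟩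
  rw [hXA] at hpX
  obtain ⟨i, hi⟩ := Set.mem_iUnion.1 hpX
  exact Set.mem_iUnion_of_mem i ⟨hp, _, hi, mortonDescends_self d L p⟩

/-- A contiguous segment of the Morton curve through a uniform or adaptive tree of
maximum refinement level `L` produces at most two distinct face-connected subdomains,
in any space dimension `d`. -/
theorem morton_adaptive_segment_at_most_two_components (d L : ℕ) (hd : 1 ≤ d)
    (T : Finset (ℕ × ℕ)) (hT : MortonAdaptiveTree d L T)
    (S : Set (ℕ × ℕ)) (hST : ∀ p ∈ S, p ∈ T)
    (hseg : ∀ x y z : ℕ, (∃ p ∈ S, mortonDescends d L p x) →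
      (∃ p ∈ S, mortonDescends d L p z) → x ≤ y → y ≤ z →
      ∃ p ∈ S, mortonDescends d L p y) :
    ∃ f : Fin 2 → Set (ℕ × ℕ), S = ⋃ i, f i ∧ ∀ i, MortonTreeConnected d L (f i) :=
  morton_adaptive_segment_at_most_two_components_general d L T hT S hST hseg
end

section
/- For any level-L quadrant Q^end, the interior of Y_0 = ⋃_{Q=0}^{Q^end} Ω(Q) ⊆ ℝ^d is star-shaped; in fact it is star-shaped with respect to the midpoint (2^{−L−1}, …, 2^{−L−1}) of Ω(0). -/
/-- The closed box `Ω(Q) = Π_r [2^{-L} Q_r, 2^{-L}(Q_r + 1)] ⊆ ℝ^d` occupied by the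
level-`L` quadrant `Q`. -/
def mortonOmega (d L Q : ℕ) : Set (Fin d → ℝ) :=
  {x | ∀ r : Fin d,
    (mortonCoord d L ((r : ℕ) + 1) Q : ℝ) / 2 ^ L ≤ x r ∧
    x r ≤ ((mortonCoord d L ((r : ℕ) + 1) Q : ℝ) + 1) / 2 ^ L}

/-- `A ⊆ ℝ^d` is star-shaped with respect to `p`. -/
def StarShapedWrt {d : ℕ} (A : Set (Fin d → ℝ)) (p : Fin d → ℝ) : Prop :=
  p ∈ A ∧ ∀ x ∈ A, segment ℝ p x ⊆ A

/-- `A ⊆ ℝ^d` is star-shaped with respect to some point of `A`. -/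
def StarShaped {d : ℕ} (A : Set (Fin d → ℝ)) : Prop :=
  ∃ p, StarShapedWrt A p

theorem StarConvex.interior {𝕜 E : Type*} [Field 𝕜] [LinearOrder 𝕜] [IsStrictOrderedRing 𝕜]
    [AddCommGroup E] [Module 𝕜 E] [TopologicalSpace E] [IsTopologicalAddGroup E]
    [ContinuousConstSMul 𝕜 E] {x : E} {s : Set E} (hs : StarConvex 𝕜 x s)
    (hx : x ∈ interior s) : StarConvex 𝕜 x (interior s) := by
  intro y hy a b ha hb hab
  rcases hb.eq_or_lt with rfl | hb
  · simpa [show a = 1 by simpa using hab] using hx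
  have homothety_eq : ∀ z, AffineMap.homothety x b z = a • x + b • z := fun z => by
    rw [AffineMap.homothety_apply, vsub_eq_sub, vadd_eq_add, eq_sub_of_add_eq hab]
    module
  have himage : AffineMap.homothety x b '' s ⊆ s := by
    rintro _ ⟨z, hz, rfl⟩
    exact homothety_eq z ▸ hs hz ha hb.le hab
  rw [← homothety_eq]
  exact interior_mono himage <|
    (AffineMap.homothety_isOpenMap x b hb.ne').image_interior_subset s ⟨y, hy, rfl⟩

theorem mod_two_pow_le_of_bits_le {m n : ℕ} (k : ℕ)
    (h : ∀ r < k, m / 2 ^ r % 2 ≤ n / 2 ^ r % 2) :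
    m % 2 ^ k ≤ n % 2 ^ k := by
  induction k with
  | zero => simp [Nat.mod_one]
  | succ k ih =>
    rw [Nat.mod_pow_succ, Nat.mod_pow_succ]
    have hlow := ih fun r hr => h r (hr.trans k.lt_succ_self)
    rcases (h k k.lt_succ_self).eq_or_lt with heq | hlt
    · rw [heq]; omega
    · have hm := Nat.mod_lt m (pow_pos two_pos k)
      have := Nat.mul_le_mul_left (2 ^ k) (Nat.succ_le_of_lt hlt)
      rw [Nat.mul_succ] at this
      omega

theorem mortonCoord_of_level_zero (d r Q : ℕ) : mortonCoord d 0 r Q = 0 := by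
  simp [mortonCoord]

theorem mortonCoord_succ (d L r Q : ℕ) :
    mortonCoord d (L + 1) (r + 1) Q = Q / 2 ^ r % 2 + 2 * mortonCoord d L (r + 1) (Q / 2 ^ d) := by
  simp only [mortonCoord, Finset.sum_range_succ', Nat.add_sub_cancel, zero_mul, zero_add,
    pow_zero, mul_one, Finset.mul_sum, Nat.div_div_eq_div_mul, ← pow_add]
  rw [add_comm]
  congr 1
  refine Finset.sum_congr rfl fun ℓ _ => ?_
  rw [pow_succ]
  ring_nf

theorem mortonCoord_lt (d L r Q : ℕ) : mortonCoord d L (r + 1) Q < 2 ^ L := by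
  induction L generalizing Q with
  | zero => simp [mortonCoord_of_level_zero]
  | succ L ih =>
    rw [mortonCoord_succ, pow_succ]
    have := ih (Q / 2 ^ d)
    omega

theorem le_of_forall_mortonCoord_le {d L Q' Q : ℕ} (hQ' : Q' < 2 ^ (d * L))
    (h : ∀ r < d, mortonCoord d L (r + 1) Q' ≤ mortonCoord d L (r + 1) Q) : Q' ≤ Q := by
  induction L generalizing Q' Q with
  | zero => simp_all
  | succ L ih =>
    have hpow : 2 ^ (d * (L + 1)) = 2 ^ d * 2 ^ (d * L) := by rw [← pow_add]; ring_nf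
    have hhigh : Q' / 2 ^ d ≤ Q / 2 ^ d := by
      refine ih (Nat.div_lt_of_lt_mul (hpow ▸ hQ')) fun r hr => ?_
      have := h r hr
      rw [mortonCoord_succ, mortonCoord_succ] at this
      omega
    rw [← Nat.mod_add_div Q' (2 ^ d), ← Nat.mod_add_div Q (2 ^ d)]
    rcases hhigh.eq_or_lt with heq | hlt
    · have hlow : Q' % 2 ^ d ≤ Q % 2 ^ d := by
        refine mod_two_pow_le_of_bits_le d fun r hr => ?_
        have := h r hr
        rw [mortonCoord_succ, mortonCoord_succ, heq] at this
        omega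
      rw [heq]; omega
    · have hm := Nat.mod_lt Q' (pow_pos two_pos d)
      have := Nat.mul_le_mul_left (2 ^ d) (Nat.succ_le_of_lt hlt)
      rw [Nat.mul_succ] at this
      omega

theorem exists_mortonCoord_eq {d L : ℕ} (k : Fin d → ℕ) (hk : ∀ r, k r < 2 ^ L) :
    ∃ Q < 2 ^ (d * L), ∀ r : Fin d, mortonCoord d L (r + 1) Q = k r := by
  let coords : Fin (2 ^ (d * L)) → Fin d → Fin (2 ^ L) :=
    fun Q r => ⟨mortonCoord d L (r + 1) Q, mortonCoord_lt d L r Q⟩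
  have hinj : coords.Injective := fun Q Q' hQQ' => by
    have hcoord : ∀ r < d, mortonCoord d L (r + 1) Q = mortonCoord d L (r + 1) Q' :=
      fun r hr => congrArg Fin.val (congrFun hQQ' ⟨r, hr⟩)
    exact Fin.ext <| le_antisymm (le_of_forall_mortonCoord_le Q.isLt fun r hr => (hcoord r hr).le)
      (le_of_forall_mortonCoord_le Q'.isLt fun r hr => (hcoord r hr).ge)
  have hbij : coords.Bijective := (Fintype.bijective_iff_injective_and_card coords).mpr
    ⟨hinj, by simp [← pow_mul, mul_comm]⟩
  obtain ⟨Q, hQ⟩ := hbij.surjective fun r => ⟨k r, hk r⟩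
  exact ⟨Q, Q.isLt, fun r => congrArg Fin.val (congrFun hQ r)⟩

theorem min_floor_div_le_and_le {q : ℕ} {t y : ℝ} (ht : 0 < t) (hy : 0 ≤ y)
    (hyq : y ≤ (q + 1) / t) :
    ((min q ⌊t * y⌋₊ : ℕ) : ℝ) / t ≤ y ∧ y ≤ ((min q ⌊t * y⌋₊ : ℕ) + 1) / t := by
  rw [le_div_iff₀ ht, mul_comm] at hyq
  rw [div_le_iff₀ ht, le_div_iff₀ ht, mul_comm y t]
  have hfloor := Nat.floor_le (mul_nonneg ht.le hy)
  have hfloor' := Nat.lt_floor_add_one (t * y)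
  rcases le_total q ⌊t * y⌋₊ with h | h
  · rw [min_eq_left h]
    exact ⟨(Nat.cast_le.mpr h).trans hfloor, hyq⟩
  · rw [min_eq_right h]
    exact ⟨hfloor, hfloor'.le⟩

def mortonLowerBox (d L Q : ℕ) : Set (Fin d → ℝ) :=
  Set.univ.pi fun r => Set.Icc 0 ((mortonCoord d L ((r : ℕ) + 1) Q + 1) / 2 ^ L)

theorem convex_mortonLowerBox (d L Q : ℕ) : Convex ℝ (mortonLowerBox d L Q) :=
  convex_pi fun _ _ => convex_Icc _ _

theorem mortonOmega_subset_mortonLowerBox (d L Q : ℕ) :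
    mortonOmega d L Q ⊆ mortonLowerBox d L Q :=
  fun _ hx r _ => ⟨(by positivity : (0 : ℝ) ≤ _ / 2 ^ L).trans (hx r).1, (hx r).2⟩

theorem mortonLowerBox_subset_biUnion_mortonOmega (d L Q : ℕ) :
    mortonLowerBox d L Q ⊆ ⋃ Q' ∈ Set.Iic Q, mortonOmega d L Q' := by
  intro y hy
  have hy' : ∀ r : Fin d, 0 ≤ y r ∧ y r ≤ (mortonCoord d L (r + 1) Q + 1) / 2 ^ L :=
    fun r => hy r (Set.mem_univ r)
  set k : Fin d → ℕ := fun r => min (mortonCoord d L (r + 1) Q) ⌊2 ^ L * y r⌋₊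
  obtain ⟨Q', hQ', hcoord⟩ := exists_mortonCoord_eq k fun r =>
    (min_le_left _ _).trans_lt (mortonCoord_lt d L r Q)
  refine Set.mem_biUnion (x := Q') ?_ fun r => ?_
  · refine le_of_forall_mortonCoord_le hQ' fun r hr => ?_
    exact hcoord ⟨r, hr⟩ ▸ min_le_left _ _
  · rw [hcoord r]
    exact min_floor_div_le_and_le (by positivity) (hy' r).1 (hy' r).2

theorem biUnion_mortonOmega_eq_biUnion_mortonLowerBox (d L Qend : ℕ) :
    ⋃ Q ∈ Set.Iic Qend, mortonOmega d L Q = ⋃ Q ∈ Set.Iic Qend, mortonLowerBox d L Q := by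
  refine subset_antisymm
    (Set.biUnion_mono le_rfl fun Q _ => mortonOmega_subset_mortonLowerBox d L Q) ?_
  refine Set.iUnion₂_subset fun Q hQ => (mortonLowerBox_subset_biUnion_mortonOmega d L Q).trans ?_
  exact Set.biUnion_subset_biUnion_left (Set.Iic_subset_Iic.mpr hQ)

theorem starConvex_biUnion_mortonOmega (d L Qend : ℕ) :
    StarConvex ℝ (fun _ => 1 / 2 ^ (L + 1)) (⋃ Q ∈ Set.Iic Qend, mortonOmega d L Q) := by
  rw [biUnion_mortonOmega_eq_biUnion_mortonLowerBox]
  refine starConvex_iUnion₂ fun Q _ => (convex_mortonLowerBox d L Q).starConvex fun r _ => ?_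
  constructor
  · positivity
  · rw [pow_succ, div_le_div_iff₀ (by positivity) (by positivity)]
    have : (0 : ℝ) ≤ mortonCoord d L (r + 1) Q := Nat.cast_nonneg _
    nlinarith [pow_pos (two_pos : (0 : ℝ) < 2) L]

theorem mem_interior_mortonOmega_zero (d L : ℕ) :
    (fun _ => 1 / 2 ^ (L + 1)) ∈ interior (mortonOmega d L 0) := by
  have hΩ : mortonOmega d L 0 = Set.univ.pi fun _ => Set.Icc 0 (1 / 2 ^ L) := by
    ext x; simp [mortonOmega, mortonCoord, Pi.le_def, forall_and]
  rw [hΩ, interior_pi_set Set.finite_univ]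
  refine fun r _ => ?_
  rw [interior_Icc]
  exact ⟨by positivity,
    one_div_lt_one_div_of_lt (by positivity) (pow_lt_pow_right₀ one_lt_two L.lt_succ_self)⟩

theorem morton_initial_union_starshaped_general (d L Qend : ℕ) :
    StarShapedWrt (interior (⋃ Q ∈ Set.Iic Qend, mortonOmega d L Q))
      (fun _ : Fin d => (1 : ℝ) / 2 ^ (L + 1)) := by
  have hcenter : (fun _ : Fin d => (1 : ℝ) / 2 ^ (L + 1)) ∈
      interior (⋃ Q ∈ Set.Iic Qend, mortonOmega d L Q) :=
    interior_mono (Set.subset_biUnion_of_mem (Set.mem_Iic.mpr Qend.zero_le))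
      (mem_interior_mortonOmega_zero d L)
  exact ⟨hcenter, fun x hx =>
    ((starConvex_biUnion_mortonOmega d L Qend).interior hcenter).segment_subset hx⟩

/-- For any level-`L` quadrant `Qend`, the interior of `Y₀ = ⋃_{Q=0}^{Qend} Ω(Q)` is
star-shaped with respect to the midpoint `(2^{-L-1}, …, 2^{-L-1})` of `Ω(0)`. -/
theorem morton_initial_union_starshaped (d L Qend : ℕ) (hd : 1 ≤ d)
    (hQend : Qend < 2 ^ (d * L)) :
    StarShapedWrt (interior (⋃ Q ∈ Set.Iic Qend, mortonOmega d L Q))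
      (fun _ : Fin d => (1 : ℝ) / 2 ^ (L + 1)) :=
  morton_initial_union_starshaped_general d L Qend
end
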